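/- Let B be a real symmetric positive definite 3×3 matrix with det B = 1. Then ℂ(B):B = (3/2)·A(B). -/

import Mathlib

open Matrix MeasureTheory

noncomputable section

/-- 3×3 real matrices. -/
abbrev Mat3 := Matrix (Fin 3) (Fin 3) ℝ

/-- Rank-4 tensors on ℝ³. -/
abbrev Tens4 := Fin 3 → Fin 3 → Fin 3 → Fin 3 → ℝ

/-- Tensor (outer) product of two matrices: `(K ⊗ L)_{ijkl} = K_{ij} L_{kl}`. -/
def otimes (K L : Mat3) : Tens4 := fun i j k l => K i j * L k l

/-- Symmetrization of a rank-4 tensor: the average over all 24 permutations of the indices. -/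
def symmetrize (T : Tens4) : Tens4 := fun i j k l =>
  (∑ σ : Equiv.Perm (Fin 4),
      T (![i, j, k, l] (σ 0)) (![i, j, k, l] (σ 1)) (![i, j, k, l] (σ 2)) (![i, j, k, l] (σ 3)))
    / 24

/-- Contraction of a rank-4 tensor with a matrix: `(𝔹:M)_{ij} = Σ_{k,l} 𝔹_{ijkl} M_{kl}`. -/
def contr (T : Tens4) (M : Mat3) : Mat3 :=
  Matrix.of fun i j => ∑ k, ∑ l, T i j k l * M k l

/-- Full contraction `N:𝔹:M = Σ_{i,j,k,l} N_{ij} 𝔹_{ijkl} M_{kl}`. -/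
def dcontr (N : Mat3) (T : Tens4) (M : Mat3) : ℝ :=
  ∑ i, ∑ j, ∑ k, ∑ l, N i j * T i j k l * M k l

/-- The matrix `(B + s·I)⁻¹` (matrix inverse). -/
def res (B : Mat3) (s : ℝ) : Mat3 := (B + s • (1 : Mat3))⁻¹

/-- `A(B) = (1/2)·∫₀^∞ (B + s·I)⁻¹ / √(det(B + s·I)) ds`, entrywise. -/
def Amat (B : Mat3) : Mat3 :=
  Matrix.of fun i j =>
    (1 / 2) * ∫ s in Set.Ioi (0 : ℝ),
      res B s i j / Real.sqrt (B + s • (1 : Mat3)).det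

/-- `𝔸(B) = (3/4)·∫₀^∞ s·S((B+sI)⁻¹ ⊗ (B+sI)⁻¹) / √(det(B+sI)) ds`, entrywise. -/
def Atens (B : Mat3) : Tens4 := fun i j k l =>
  (3 / 4) * ∫ s in Set.Ioi (0 : ℝ),
    s * symmetrize (otimes (res B s) (res B s)) i j k l
      / Real.sqrt (B + s • (1 : Mat3)).det

/-- `ℂ(B) = (3/4)·∫₀^∞ S((B+sI)⁻¹ ⊗ (B+sI)⁻¹) / √(det(B+sI)) ds`, entrywise. -/
def Ctens (B : Mat3) : Tens4 := fun i j k l =>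
  (3 / 4) * ∫ s in Set.Ioi (0 : ℝ),
    symmetrize (otimes (res B s) (res B s)) i j k l
      / Real.sqrt (B + s • (1 : Mat3)).det


/-!
Write `R = (B + sI)⁻¹` and `D = det (B + sI)`. For symmetric `R` and `B` the symmetrized
contraction is `S(R ⊗ R) : B = (tr (RB) R + 2 RBR) / 3`, and `RB = I - sR` turns it into
`(5R - s tr (R) R - 2sR²) / 3`. Diagonalizing `B` gives `dR/ds = -R²` and `dD/ds = D tr R`, so
`(S(R ⊗ R) : B - R) / √D` is the derivative of `(2/3) s R / √D`, which vanishes at `s = 0` and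
as `s → ∞`. Hence `∫ S(R ⊗ R) : B / √D = ∫ R / √D`, which is the claim. Every integrand is
continuous on `[0, ∞)` and `O(s^(-5/2))`, hence integrable.
-/

open Filter Set Asymptotics Topology Unitary

lemma isBigO_inv_const_add_atTop (c : ℝ) :
    (fun t : ℝ => (c + t)⁻¹) =O[atTop] fun t => t ^ (-1 : ℝ) := by
  simp only [Real.rpow_neg_one]
  have := ((IsEquivalent.refl (u := fun t : ℝ => t)).add_isLittleO
    (isLittleO_const_id_atTop c)).inv
  exact this.isBigO.congr' (.of_forall fun t => by simp [add_comm]) (.of_forall fun t => rfl)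

lemma rpow_mul_rpow_eventuallyEq_atTop (a b : ℝ) :
    (fun t : ℝ => t ^ a * t ^ b) =ᶠ[atTop] fun t => t ^ (a + b) :=
  (eventually_gt_atTop 0).mono fun _ ht => (Real.rpow_add ht a b).symm

lemma integrableOn_Ioi_of_isBigO_rpow {f : ℝ → ℝ} {a r : ℝ} (hf : ContinuousOn f (Ici a))
    (ho : f =O[atTop] fun t => t ^ r) (hr : r < -1) : IntegrableOn f (Ioi a) :=
  ((hf.locallyIntegrableOn measurableSet_Ici).integrableOn_of_isBigO_atTop ho
    (integrableAtFilter_rpow_atTop_iff.2 hr)).mono_set Ioi_subset_Ici_self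

namespace Matrix

variable {n : Type*} [Fintype n] [DecidableEq n]

lemma conjStarAlgAut_diagonal_apply (U : unitaryGroup n ℝ) (f : n → ℝ) (i j : n) :
    conjStarAlgAut ℝ _ U (diagonal f) i j = ∑ a, U i a * U j a * f a := by
  simp only [conjStarAlgAut_apply, mul_apply, diagonal_apply, mul_ite, mul_zero,
    Finset.sum_ite_eq', Finset.mem_univ, ↓reduceIte, star_apply, star_trivial]
  exact Finset.sum_congr rfl fun a _ => by ring

lemma trace_conjStarAlgAut (U : unitaryGroup n ℝ) (M : Matrix n n ℝ) :
    (conjStarAlgAut ℝ _ U M).trace = M.trace := by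
  rw [conjStarAlgAut_apply, trace_mul_cycle, coe_star_mul_self, one_mul]

lemma det_conjStarAlgAut (U : unitaryGroup n ℝ) (M : Matrix n n ℝ) :
    (conjStarAlgAut ℝ _ U M).det = M.det := by
  rw [conjStarAlgAut_apply, det_mul_comm, ← mul_assoc, coe_star_mul_self, one_mul]

namespace IsHermitian

variable {B : Matrix n n ℝ} (hB : B.IsHermitian)
include hB

lemma add_smul_one_eq_conjStarAlgAut (s : ℝ) :
    B + s • 1 = conjStarAlgAut ℝ _ hB.eigenvectorUnitary
      (diagonal fun a => hB.eigenvalues a + s) := by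
  have hdiag : diagonal hB.eigenvalues + s • 1 = diagonal fun a => hB.eigenvalues a + s := by
    rw [smul_one_eq_diagonal, diagonal_add]
  rw [← hdiag, map_add, map_smul, map_one]
  conv_lhs => rw [hB.spectral_theorem, RCLike.ofReal_real_eq_id, Function.id_comp]

lemma det_add_smul_one (s : ℝ) : (B + s • 1).det = ∏ a, (hB.eigenvalues a + s) := by
  rw [hB.add_smul_one_eq_conjStarAlgAut, det_conjStarAlgAut, det_diagonal]

lemma inv_add_smul_one {s : ℝ} (hs : ∀ a, hB.eigenvalues a + s ≠ 0) :
    (B + s • 1)⁻¹ = conjStarAlgAut ℝ _ hB.eigenvectorUnitary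
      (diagonal fun a => (hB.eigenvalues a + s)⁻¹) := by
  refine inv_eq_right_inv ?_
  rw [hB.add_smul_one_eq_conjStarAlgAut, ← map_mul, diagonal_mul_diagonal]
  simp [mul_inv_cancel₀ (hs _)]

lemma inv_add_smul_one_apply {s : ℝ} (hs : ∀ a, hB.eigenvalues a + s ≠ 0) (i j : n) :
    (B + s • 1)⁻¹ i j = ∑ a, hB.eigenvectorUnitary i a * hB.eigenvectorUnitary j a *
      (hB.eigenvalues a + s)⁻¹ := by
  rw [hB.inv_add_smul_one hs, conjStarAlgAut_diagonal_apply]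

lemma inv_add_smul_one_mul_self_apply {s : ℝ} (hs : ∀ a, hB.eigenvalues a + s ≠ 0) (i j : n) :
    ((B + s • 1)⁻¹ * (B + s • 1)⁻¹) i j = ∑ a, hB.eigenvectorUnitary i a *
      hB.eigenvectorUnitary j a * (hB.eigenvalues a + s)⁻¹ ^ 2 := by
  rw [hB.inv_add_smul_one hs, ← map_mul, diagonal_mul_diagonal, conjStarAlgAut_diagonal_apply]
  simp only [sq]

lemma trace_inv_add_smul_one {s : ℝ} (hs : ∀ a, hB.eigenvalues a + s ≠ 0) :
    (B + s • 1)⁻¹.trace = ∑ a, (hB.eigenvalues a + s)⁻¹ := by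
  rw [hB.inv_add_smul_one hs, trace_conjStarAlgAut, trace_diagonal]

lemma hasDerivAt_inv_add_smul_one_apply {s : ℝ} (hs : ∀ a, hB.eigenvalues a + s ≠ 0)
    (i j : n) :
    HasDerivAt (fun t : ℝ => (B + t • 1)⁻¹ i j) (-((B + s • 1)⁻¹ * (B + s • 1)⁻¹) i j) s := by
  have hnear : ∀ᶠ t in 𝓝 s, ∀ a, hB.eigenvalues a + t ≠ 0 := eventually_all.2 fun a =>
    (continuous_const.add continuous_id).continuousAt.eventually_ne (hs a)
  rw [hB.inv_add_smul_one_mul_self_apply hs, ← Finset.sum_neg_distrib]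
  refine HasDerivAt.congr_of_eventuallyEq ?_
    (hnear.mono fun t ht => hB.inv_add_smul_one_apply ht i j)
  refine HasDerivAt.fun_sum fun a _ => ?_
  refine ((((hasDerivAt_id s).const_add (hB.eigenvalues a)).inv (hs a)).const_mul
    (hB.eigenvectorUnitary i a * hB.eigenvectorUnitary j a)).congr_deriv ?_
  simp [div_eq_mul_inv]

lemma hasDerivAt_det_add_smul_one {s : ℝ} (hs : ∀ a, hB.eigenvalues a + s ≠ 0) :
    HasDerivAt (fun t : ℝ => (B + t • 1).det) ((B + s • 1).det * (B + s • 1)⁻¹.trace) s := by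
  simp only [hB.det_add_smul_one, hB.trace_inv_add_smul_one hs, Finset.mul_sum]
  refine (HasDerivAt.fun_finsetProd fun a _ =>
    (hasDerivAt_id s).const_add (hB.eigenvalues a)).congr_deriv
      (Finset.sum_congr rfl fun a _ => ?_)
  rw [← Finset.mul_prod_erase _ _ (Finset.mem_univ a)]
  field_simp [hs a]
  simp

lemma isBigO_inv_add_smul_one_apply (i j : n) :
    (fun t : ℝ => (B + t • 1)⁻¹ i j) =O[atTop] fun t => t ^ (-1 : ℝ) := by
  have hfar : ∀ᶠ t in atTop, ∀ a, hB.eigenvalues a + t ≠ 0 := eventually_all.2 fun a =>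
    (eventually_gt_atTop (-hB.eigenvalues a)).mono fun t ht => by linarith
  refine IsBigO.congr' ?_ (hfar.mono fun t ht => (hB.inv_add_smul_one_apply ht i j).symm)
    EventuallyEq.rfl
  exact IsBigO.fun_sum fun a _ => (isBigO_inv_const_add_atTop _).const_mul_left _

end IsHermitian

lemma PosSemidef.isBigO_inv_sqrt_det_add_smul_one {B : Matrix n n ℝ} (hB : B.PosSemidef) :
    (fun t : ℝ => (√(B + t • 1).det)⁻¹) =O[atTop]
      fun t => t ^ (-(Fintype.card n : ℝ) / 2) := by
  refine IsBigO.of_bound 1 ((eventually_gt_atTop 0).mono fun t ht => ?_)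
  have hpow : t ^ Fintype.card n ≤ (B + t • 1).det := by
    rw [hB.isHermitian.det_add_smul_one, ← Finset.card_univ, ← Finset.prod_const]
    exact Finset.prod_le_prod (fun _ _ => ht.le) fun a _ => by
      linarith [hB.eigenvalues_nonneg a]
  have hsqrt : t ^ ((Fintype.card n : ℝ) / 2) ≤ √(B + t • 1).det := by
    rw [Real.sqrt_eq_rpow, div_eq_mul_one_div, Real.rpow_mul ht.le, Real.rpow_natCast]
    exact Real.rpow_le_rpow (by positivity) hpow (by norm_num)
  rw [one_mul, Real.norm_of_nonneg (by positivity), Real.norm_of_nonneg (by positivity),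
    neg_div, Real.rpow_neg ht.le]
  exact inv_anti₀ (by positivity) hsqrt

namespace PosDef

variable {B : Matrix n n ℝ} (hB : B.PosDef)
include hB

lemma eigenvalues_add_ne_zero {s : ℝ} (hs : 0 ≤ s) (a : n) :
    hB.isHermitian.eigenvalues a + s ≠ 0 :=
  (add_pos_of_pos_of_nonneg (hB.eigenvalues_pos a) hs).ne'

lemma det_add_smul_one_pos {s : ℝ} (hs : 0 ≤ s) : 0 < (B + s • 1).det := by
  rw [hB.isHermitian.det_add_smul_one]
  exact Finset.prod_pos fun a _ => add_pos_of_pos_of_nonneg (hB.eigenvalues_pos a) hs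

lemma continuousOn_inv_sqrt_det_add_smul_one :
    ContinuousOn (fun t : ℝ => (√(B + t • 1).det)⁻¹) (Ici 0) := by
  refine ContinuousOn.inv₀ (fun t ht => ?_) fun t ht =>
    (Real.sqrt_pos.2 (hB.det_add_smul_one_pos ht)).ne'
  exact (hB.isHermitian.hasDerivAt_det_add_smul_one
    (hB.eigenvalues_add_ne_zero ht)).continuousAt.sqrt.continuousWithinAt

end PosDef

end Matrix

lemma sum_perm_fin_four {M : Type*} [AddCommMonoid M] (G : Fin 4 → Fin 4 → Fin 4 → Fin 4 → M) :
    ∑ σ : Equiv.Perm (Fin 4), G (σ 0) (σ 1) (σ 2) (σ 3) =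
      G 0 1 2 3 + G 0 1 3 2 + G 0 2 1 3 + G 0 2 3 1 + G 0 3 1 2 + G 0 3 2 1 +
      G 1 0 2 3 + G 1 0 3 2 + G 1 2 0 3 + G 1 2 3 0 + G 1 3 0 2 + G 1 3 2 0 +
      G 2 0 1 3 + G 2 0 3 1 + G 2 1 0 3 + G 2 1 3 0 + G 2 3 0 1 + G 2 3 1 0 +
      G 3 0 1 2 + G 3 0 2 1 + G 3 1 0 2 + G 3 1 2 0 + G 3 2 0 1 + G 3 2 1 0 := by
  have hperms : Finset.univ.val.map (fun σ : Equiv.Perm (Fin 4) => (σ 0, σ 1, σ 2, σ 3)) =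
      ↑[((0 : Fin 4), (1 : Fin 4), (2 : Fin 4), (3 : Fin 4)), (0, 1, 3, 2), (0, 2, 1, 3),
        (0, 2, 3, 1), (0, 3, 1, 2), (0, 3, 2, 1), (1, 0, 2, 3), (1, 0, 3, 2), (1, 2, 0, 3),
        (1, 2, 3, 0), (1, 3, 0, 2), (1, 3, 2, 0), (2, 0, 1, 3), (2, 0, 3, 1), (2, 1, 0, 3),
        (2, 1, 3, 0), (2, 3, 0, 1), (2, 3, 1, 0), (3, 0, 1, 2), (3, 0, 2, 1), (3, 1, 0, 2),
        (3, 1, 2, 0), (3, 2, 0, 1), (3, 2, 1, 0)] := by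
    decide
  calc ∑ σ : Equiv.Perm (Fin 4), G (σ 0) (σ 1) (σ 2) (σ 3)
      = ((Finset.univ.val.map fun σ : Equiv.Perm (Fin 4) => (σ 0, σ 1, σ 2, σ 3)).map
          fun p => G p.1 p.2.1 p.2.2.1 p.2.2.2).sum := by
        rw [Multiset.map_map]; rfl
    _ = _ := by
        rw [hperms]
        simp only [Multiset.map_coe, List.map_cons, List.map_nil, Multiset.sum_coe,
          List.sum_cons, List.sum_nil, add_zero]
        abel

lemma symmetrize_otimes_self_apply {R : Mat3} (hR : R.IsSymm) (i j k l : Fin 3) :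
    symmetrize (otimes R R) i j k l = (R i j * R k l + R i k * R j l + R i l * R j k) / 3 := by
  rw [symmetrize, sum_perm_fin_four fun a b c d =>
    otimes R R (![i, j, k, l] a) (![i, j, k, l] b) (![i, j, k, l] c) (![i, j, k, l] d)]
  simp only [otimes, cons_val_zero, cons_val_one, cons_val_two, cons_val_three, head_cons,
    tail_cons]
  rw [hR.apply i j, hR.apply i k, hR.apply i l, hR.apply j k, hR.apply j l, hR.apply k l]
  ring

lemma contr_symmetrize_otimes_self {R M : Mat3} (hR : R.IsSymm) (hM : M.IsSymm) :
    contr (symmetrize (otimes R R)) M =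
      (3 : ℝ)⁻¹ • ((R * M).trace • R + (2 : ℝ) • (R * M * R)) := by
  have hRMR : (R * M * R).IsSymm := by
    simp only [IsSymm, transpose_mul, hR.eq, hM.eq, Matrix.mul_assoc]
  have htr : (R * M).trace = ∑ k, ∑ l, R k l * M k l := by
    simp only [trace, diag_apply, mul_apply, hM.apply]
  have hsandwich : ∀ i j, (R * M * R) i j = ∑ k, ∑ l, R i k * M k l * R j l := fun i j => by
    simp only [mul_apply, Finset.sum_mul]
    conv_lhs => rw [Finset.sum_comm]
    exact Finset.sum_congr rfl fun k _ => Finset.sum_congr rfl fun l _ => by rw [hR.apply j l]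
  ext i j
  rw [Matrix.smul_apply, Matrix.add_apply, Matrix.smul_apply, Matrix.smul_apply, two_smul]
  nth_rewrite 2 [← hRMR.apply]
  rw [hsandwich, hsandwich, htr]
  simp only [contr, of_apply, symmetrize_otimes_self_apply hR, smul_eq_mul, Finset.mul_sum,
    Finset.sum_mul, ← Finset.sum_add_distrib]
  exact Finset.sum_congr rfl fun k _ => Finset.sum_congr rfl fun l _ => by ring

lemma contr_symmetrize_otimes_res {B : Mat3} (hB : B.IsSymm) {s : ℝ}
    (hs : IsUnit (B + s • (1 : Mat3)).det) :
    contr (symmetrize (otimes (res B s) (res B s))) B =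
      (3 : ℝ)⁻¹ • ((5 - s * (res B s).trace) • res B s - (2 * s) • (res B s * res B s)) := by
  have hR : (res B s).IsSymm := (hB.add (isSymm_one.smul s)).inv
  have hRB : res B s * B = 1 - s • res B s := by
    have h := nonsing_inv_mul _ hs
    rw [Matrix.mul_add, Matrix.mul_smul, Matrix.mul_one] at h
    exact eq_sub_of_add_eq h
  rw [contr_symmetrize_otimes_self hR hB, hRB, Matrix.sub_mul, Matrix.one_mul, Matrix.smul_mul,
    trace_sub, trace_one, trace_smul, Fintype.card_fin]
  module

lemma isBigO_symmetrize_otimes_self {α : Type*} {L : Filter α} {M : α → Mat3} {g : α → ℝ}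
    (h : ∀ p q, (fun t => M t p q) =O[L] g) (i j k l : Fin 3) :
    (fun t => symmetrize (otimes (M t) (M t)) i j k l) =O[L] fun t => g t * g t := by
  simp only [symmetrize, otimes, div_eq_inv_mul]
  exact (IsBigO.fun_sum fun σ _ => (h _ _).mul (h _ _)).const_mul_left _

lemma continuousOn_symmetrize_otimes_self {α : Type*} [TopologicalSpace α] {S : Set α}
    {M : α → Mat3} (h : ∀ p q, ContinuousOn (fun t => M t p q) S) (i j k l : Fin 3) :
    ContinuousOn (fun t => symmetrize (otimes (M t) (M t)) i j k l) S := by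
  simp only [symmetrize, otimes]
  exact (continuousOn_finsetSum _ fun σ _ => (h _ _).mul (h _ _)).div_const _

section Resolvent

variable {B : Mat3} (hB : B.PosDef)
include hB

lemma hasDerivAt_res_apply {s : ℝ} (hs : 0 ≤ s) (i j : Fin 3) :
    HasDerivAt (fun t => res B t i j) (-(res B s * res B s) i j) s :=
  hB.isHermitian.hasDerivAt_inv_add_smul_one_apply (hB.eigenvalues_add_ne_zero hs) i j

lemma continuousOn_res_apply (i j : Fin 3) : ContinuousOn (fun t => res B t i j) (Ici 0) :=
  fun _ ht => (hasDerivAt_res_apply hB ht i j).continuousAt.continuousWithinAt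

lemma integrableOn_div_sqrt_det {f : ℝ → ℝ} {r : ℝ} (hf : ContinuousOn f (Ici 0))
    (ho : f =O[atTop] fun t => t ^ r) (hr : r < 1 / 2) :
    IntegrableOn (fun t => f t / √(B + t • 1).det) (Ioi 0) := by
  simp only [div_eq_mul_inv]
  refine integrableOn_Ioi_of_isBigO_rpow (hf.mul hB.continuousOn_inv_sqrt_det_add_smul_one)
    ((ho.mul hB.posSemidef.isBigO_inv_sqrt_det_add_smul_one).trans_eventuallyEq
      (rpow_mul_rpow_eventuallyEq_atTop _ _)) ?_
  simp only [Fintype.card_fin]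
  linarith

lemma integrableOn_res_apply_div_sqrt_det (i j : Fin 3) :
    IntegrableOn (fun t => res B t i j / √(B + t • 1).det) (Ioi 0) :=
  integrableOn_div_sqrt_det hB (continuousOn_res_apply hB i j)
    (hB.isHermitian.isBigO_inv_add_smul_one_apply i j) (by norm_num)

lemma integrableOn_symmetrize_otimes_res_div_sqrt_det (i j k l : Fin 3) :
    IntegrableOn (fun t => symmetrize (otimes (res B t) (res B t)) i j k l / √(B + t • 1).det)
      (Ioi 0) :=
  integrableOn_div_sqrt_det hB
    (continuousOn_symmetrize_otimes_self (continuousOn_res_apply hB) i j k l)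
    ((isBigO_symmetrize_otimes_self hB.isHermitian.isBigO_inv_add_smul_one_apply
      i j k l).trans_eventuallyEq (rpow_mul_rpow_eventuallyEq_atTop _ _)) (by norm_num)

lemma integrableOn_contr_symmetrize_otimes_res_div_sqrt_det (M : Mat3) (i j : Fin 3) :
    IntegrableOn (fun t => contr (symmetrize (otimes (res B t) (res B t))) M i j /
      √(B + t • 1).det) (Ioi 0) := by
  simp only [contr, of_apply, Finset.sum_div, mul_div_right_comm]
  exact integrable_finsetSum _ fun k _ => integrable_finsetSum _ fun l _ =>
    (integrableOn_symmetrize_otimes_res_div_sqrt_det hB i j k l).mul_const _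

lemma contr_Ctens_apply (M : Mat3) (i j : Fin 3) :
    contr (Ctens B) M i j = 3 / 4 * ∫ s in Ioi 0,
      contr (symmetrize (otimes (res B s) (res B s))) M i j / √(B + s • 1).det := by
  have h := integrableOn_symmetrize_otimes_res_div_sqrt_det hB i j
  simp only [contr, of_apply, Ctens, Finset.sum_div, mul_div_right_comm]
  rw [integral_finsetSum _ fun k _ => integrable_finsetSum _ fun l _ =>
    (h k l).mul_const (M k l)]
  simp only [integral_finsetSum _ fun l _ => (h _ l).mul_const (M _ l), integral_mul_const,
    Finset.mul_sum, mul_assoc]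

lemma hasDerivAt_mul_res_apply_div_sqrt_det {s : ℝ} (hs : 0 ≤ s) (i j : Fin 3) :
    HasDerivAt (fun t => t * res B t i j / √(B + t • 1).det)
      ((res B s i j - s * (res B s * res B s) i j - s / 2 * (res B s).trace * res B s i j) /
        √(B + s • 1).det) s := by
  have hdet := hB.det_add_smul_one_pos hs
  have hsqrt := (hB.isHermitian.hasDerivAt_det_add_smul_one
    (hB.eigenvalues_add_ne_zero hs)).sqrt hdet.ne'
  refine (((hasDerivAt_id s).mul (hasDerivAt_res_apply hB hs i j)).div hsqrt
    (Real.sqrt_pos.2 hdet).ne').congr_deriv ?_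
  have hsq : √(B + s • 1).det ^ 2 = (B + s • 1).det := Real.sq_sqrt hdet.le
  simp only [res, Pi.mul_apply, id_eq]
  field_simp
  rw [hsq]
  ring

lemma tendsto_mul_res_apply_div_sqrt_det (i j : Fin 3) :
    Tendsto (fun t => t * res B t i j / √(B + t • 1).det) atTop (𝓝 0) := by
  have hid : (fun t : ℝ => t) =O[atTop] fun t => t ^ (1 : ℝ) := by
    simp only [Real.rpow_one]; exact isBigO_refl _ _
  have ho := (((hid.mul (hB.isHermitian.isBigO_inv_add_smul_one_apply i j)).trans_eventuallyEq
    (rpow_mul_rpow_eventuallyEq_atTop _ _)).mul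
      hB.posSemidef.isBigO_inv_sqrt_det_add_smul_one).trans_eventuallyEq
        (rpow_mul_rpow_eventuallyEq_atTop _ _)
  simp only [div_eq_mul_inv]
  refine ho.trans_tendsto ?_
  convert tendsto_rpow_neg_atTop (y := 3 / 2) (by norm_num) using 3
  simp only [Fintype.card_fin]
  norm_num

lemma integral_contr_symmetrize_otimes_res_div_sqrt_det (i j : Fin 3) :
    ∫ s in Ioi 0, contr (symmetrize (otimes (res B s) (res B s))) B i j / √(B + s • 1).det =
      ∫ s in Ioi 0, res B s i j / √(B + s • 1).det := by
  have hF := integrableOn_contr_symmetrize_otimes_res_div_sqrt_det hB B i j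
  have hG := integrableOn_res_apply_div_sqrt_det hB i j
  have hderiv : ∀ s ∈ Ici (0 : ℝ),
      HasDerivAt (fun t => 2 / 3 * (t * res B t i j / √(B + t • 1).det))
        (contr (symmetrize (otimes (res B s) (res B s))) B i j / √(B + s • 1).det -
          res B s i j / √(B + s • 1).det) s := fun s hs => by
    refine ((hasDerivAt_mul_res_apply_div_sqrt_det hB hs i j).const_mul _).congr_deriv ?_
    rw [contr_symmetrize_otimes_res (isHermitian_iff_isSymm.1 hB.isHermitian)
      (hB.det_add_smul_one_pos hs).ne'.isUnit]
    simp only [Matrix.smul_apply, Matrix.sub_apply, smul_eq_mul]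
    ring
  have hftc := integral_Ioi_of_hasDerivAt_of_tendsto' hderiv (hF.sub hG)
    (by simpa using (tendsto_mul_res_apply_div_sqrt_det hB i j).const_mul (2 / 3 : ℝ))
  rw [integral_sub hF hG] at hftc
  simp only [zero_mul, zero_div, mul_zero, sub_zero] at hftc
  exact sub_eq_zero.1 hftc

end Resolvent

theorem Ctens_contract_self_general (B : Mat3) (hB : B.PosDef) :
    contr (Ctens B) B = (3 / 2 : ℝ) • Amat B := by
  ext i j
  rw [contr_Ctens_apply hB, integral_contr_symmetrize_otimes_res_div_sqrt_det hB,
    Matrix.smul_apply, Amat, of_apply, smul_eq_mul]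
  ring

theorem Ctens_contract_self (B : Mat3) (hB : B.PosDef) (hdet : B.det = 1) :
    contr (Ctens B) B = (3 / 2 : ℝ) • Amat B :=
  Ctens_contract_self_general B hB
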